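/- arXiv:2101.11541 — 2 statements merged into one kernel-verified Lean document; each statement's English description precedes it below -/
import Mathlib

section
/- Let G be a finite group, N a normal subgroup, and suppose that every element of N \ Z(N) is flat in G (i.e., cl_G(g) = g[g,G] for all g ∈ N with g ∉ Z(N)). Then N is nilpotent. -/
open scoped commutatorElement

/-- The subgroup `[g,G]` generated by the commutators `[g,x]`, `x ∈ G`. -/
def commSub {G : Type*} [Group G] (g : G) : Subgroup G :=
  Subgroup.closure {c | ∃ x : G, c = ⁅g, x⁆}

/-- The conjugacy class of `g` in `G`. -/
def conjClass {G : Type*} [Group G] (g : G) : Set G := {h | IsConj g h}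

/-- `g` is flat in `G` if its conjugacy class is the coset `g[g,G]`. -/
def IsFlat {G : Type*} [Group G] (g : G) : Prop :=
  conjClass g = (g * ·) '' (commSub g : Set G)

/-!
Induction on `|N|`. Let `M ≤ N` be a minimal normal subgroup of `G`. For `g ∈ M` flat, `[g,G]` is
a normal subgroup of `G` inside `M`, so it is trivial (and `g` is central) or equal to `M`; in the
latter case `g⁻¹ ∈ [g,G]`, so `1 ∈ g[g,G] = cl_G(g)` and `g = 1`. Hence `M ≤ Z(N)`. Flatness passes
to quotients, so the image of `N` in `G/M` is nilpotent by induction, and a central extension of a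
nilpotent group is nilpotent.
-/

section

open Subgroup

variable {G H : Type*} [Group G] [Group H]

lemma Subgroup.map_center_le_center_of_surjective {f : G →* H} (hf : Function.Surjective f) :
    (center G).map f ≤ center H := by
  rintro - ⟨z, hz, rfl⟩
  refine mem_center_iff.2 fun b => ?_
  obtain ⟨a, rfl⟩ := hf b
  rw [← map_mul, ← map_mul, mem_center_iff.1 hz a]

lemma MonoidHom.card_lt_of_surjective_of_ker_ne_bot [Finite G] {f : G →* H}
    (hf : Function.Surjective f) (hker : f.ker ≠ ⊥) : Nat.card H < Nat.card G :=
  (Nat.card_le_card_of_surjective f hf).lt_of_ne fun h =>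
    hker (f.ker_eq_bot_iff.2 (hf.bijective_of_nat_card_le h.ge).1)

lemma exists_minimal_normal_le [Finite G] {N : Subgroup G} [N.Normal] (hN : N ≠ ⊥) :
    ∃ M ≤ N, M.Normal ∧ M ≠ ⊥ ∧ ∀ K : Subgroup G, K.Normal → K ≤ M → K = ⊥ ∨ K = M := by
  obtain ⟨M, hMN, hM⟩ :=
    exists_minimal_le_of_wellFoundedLT (fun K : Subgroup G => K.Normal ∧ K ≠ ⊥) N ⟨‹_›, hN⟩
  refine ⟨M, hMN, hM.prop.1, hM.prop.2, fun K hK hKM => or_iff_not_imp_left.2 fun hK₁ => ?_⟩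
  exact hKM.antisymm (hM.le_of_le ⟨hK, hK₁⟩ hKM)

lemma commSub_normal (g : G) : (commSub g).Normal := by
  refine ⟨fun n hn h => ?_⟩
  have hconj : (commSub g).map (MulAut.conj h).toMonoidHom ≤ commSub g := by
    rw [commSub, MonoidHom.map_closure, closure_le]
    rintro - ⟨-, ⟨x, rfl⟩, rfl⟩
    have hid : (MulAut.conj h).toMonoidHom ⁅g, x⁆ = ⁅g, h⁆⁻¹ * ⁅g, h * x⁆ := by
      simp only [MulAut.conj_apply, MulEquiv.coe_toMonoidHom, commutatorElement_def]
      group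
    rw [hid]
    exact mul_mem (inv_mem (subset_closure ⟨h, rfl⟩)) (subset_closure ⟨h * x, rfl⟩)
  exact hconj ⟨n, hn, rfl⟩

lemma commSub_le_of_mem {g : G} {M : Subgroup G} [hM : M.Normal] (hg : g ∈ M) :
    commSub g ≤ M := by
  rw [commSub, closure_le]
  rintro - ⟨x, rfl⟩
  rw [show ⁅g, x⁆ = g * (x * g⁻¹ * x⁻¹) by group]
  exact mul_mem hg (hM.conj_mem _ (inv_mem hg) x)

lemma mem_center_of_commSub_eq_bot {g : G} (hg : commSub g = ⊥) : g ∈ center G := by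
  refine mem_center_iff.2 fun x => (commutatorElement_eq_one_iff_mul_comm.1 ?_).symm
  rw [← mem_bot, ← hg]
  exact subset_closure ⟨x, rfl⟩

lemma conjClass_map {f : G →* H} (hf : Function.Surjective f) (g : G) :
    conjClass (f g) = f '' conjClass g := by
  ext b
  constructor
  · intro hb
    obtain ⟨c, hc⟩ := isConj_iff.mp hb
    obtain ⟨y, rfl⟩ := hf c
    exact ⟨y * g * y⁻¹, isConj_iff.mpr ⟨y, rfl⟩, by simp [← hc]⟩
  · rintro ⟨a, ha, rfl⟩
    obtain ⟨c, rfl⟩ := isConj_iff.mp ha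
    exact isConj_iff.mpr ⟨f c, by simp⟩

lemma commSub_map {f : G →* H} (hf : Function.Surjective f) (g : G) :
    commSub (f g) = (commSub g).map f := by
  rw [commSub, commSub, MonoidHom.map_closure]
  congr 1
  ext c
  constructor
  · rintro ⟨x, rfl⟩
    obtain ⟨y, rfl⟩ := hf x
    exact ⟨⁅g, y⁆, ⟨y, rfl⟩, map_commutatorElement f g y⟩
  · rintro ⟨-, ⟨y, rfl⟩, rfl⟩
    exact ⟨f y, map_commutatorElement f g y⟩

namespace IsFlat

variable {g : G}

lemma map (hg : IsFlat g) {f : G →* H} (hf : Function.Surjective f) : IsFlat (f g) := by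
  unfold IsFlat at *
  rw [conjClass_map hf, commSub_map hf, hg, ← Set.image_comp, coe_map, ← Set.image_comp]
  exact Set.image_congr fun a _ => by simp

lemma eq_one_of_mem_commSub (hg : IsFlat g) (h : g ∈ commSub g) : g = 1 := by
  have h1 : (1 : G) ∈ conjClass g := hg ▸ ⟨g⁻¹, inv_mem h, mul_inv_cancel g⟩
  exact isConj_one_left.1 h1

lemma mem_center_of_minimal_normal (hg : IsFlat g) {M : Subgroup G} [M.Normal]
    (hM : ∀ K : Subgroup G, K.Normal → K ≤ M → K = ⊥ ∨ K = M) (hgM : g ∈ M) :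
    g ∈ center G := by
  rcases hM _ (commSub_normal g) (commSub_le_of_mem hgM) with h | h
  · exact mem_center_of_commSub_eq_bot h
  · rw [hg.eq_one_of_mem_commSub (h ▸ hgM)]
    exact one_mem _

end IsFlat

def FlatOffCenter (N : Subgroup G) : Prop :=
  ∀ g ∈ N, g ∉ (center N).map N.subtype → IsFlat g

namespace FlatOffCenter

variable {N : Subgroup G}

lemma map (hN : FlatOffCenter N) {f : G →* H} (hf : Function.Surjective f) :
    FlatOffCenter (N.map f) := by
  rintro - ⟨x, hxN, rfl⟩ hx
  refine (hN x hxN fun ⟨z, hz, hzx⟩ => hx ⟨f.subgroupMap N z, ?_, hzx ▸ rfl⟩).map hf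
  exact map_center_le_center_of_surjective (f.subgroupMap_surjective N) ⟨z, hz, rfl⟩

lemma subgroupOf_le_center (hN : FlatOffCenter N) {M : Subgroup G} [M.Normal]
    (hM : ∀ K : Subgroup G, K.Normal → K ≤ M → K = ⊥ ∨ K = M) :
    M.subgroupOf N ≤ center N := by
  intro x hxM
  by_cases hxZ : (x : G) ∈ (center N).map N.subtype
  · obtain ⟨z, hz, hzx⟩ := hxZ
    rwa [← Subtype.ext hzx]
  · have hx := (hN x x.2 hxZ).mem_center_of_minimal_normal hM hxM
    exact mem_center_iff.2 fun m => Subtype.ext (mem_center_iff.1 hx m)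

theorem isNilpotent [Finite G] [N.Normal] (hN : FlatOffCenter N) : Group.IsNilpotent N := by
  induction hn : Nat.card N using Nat.strong_induction_on generalizing G with
  | _ n ih =>
  rcases eq_or_ne N ⊥ with rfl | hN₁
  · infer_instance
  obtain ⟨M, hMN, hMnormal, hM₁, hMmin⟩ := exists_minimal_normal_le hN₁
  let ψ := (QuotientGroup.mk' M).subgroupMap N
  have hψ : Function.Surjective ψ := (QuotientGroup.mk' M).subgroupMap_surjective N
  have hker : ψ.ker = M.subgroupOf N := by
    rw [ker_subgroupMap, QuotientGroup.ker_mk']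
  have hcard : Nat.card (N.map (QuotientGroup.mk' M)) < n := by
    refine hn ▸ MonoidHom.card_lt_of_surjective_of_ker_ne_bot hψ ?_
    rw [hker, Ne, subgroupOf_eq_bot]
    exact fun h => hM₁ (h.eq_bot_of_le hMN)
  have : Group.IsNilpotent (N.map (QuotientGroup.mk' M)) :=
    ih _ hcard (hN.map (QuotientGroup.mk'_surjective M)) rfl
  exact Subgroup.isNilpotent_of_ker_le_center ψ (hker ▸ hN.subgroupOf_le_center hMmin)

end FlatOffCenter

end

theorem nilpotent_of_flat_off_center {G : Type*} [Group G] [Fintype G]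
    (N : Subgroup G) [N.Normal]
    (h : ∀ g ∈ N, g ∉ Subgroup.map N.subtype (Subgroup.center ↥N) → IsFlat g) :
    Group.IsNilpotent N :=
  FlatOffCenter.isNilpotent h
end

section
/- Let G be a finite group, N a normal subgroup, g ∈ N, and suppose that cl_G(g) = g[g,G] and that the normal closure of g in G equals a minimal normal subgroup M of G contained in N. Then g ∈ Z(G). -/
open scoped commutatorElement

/-!
`[g,G]` is a normal subgroup of the normal closure `⟨g⟩^G`. If `g` is flat and `g ∈ [g,G]`,
then `1 = g g⁻¹ ∈ g[g,G]` is conjugate to `g`, so `g = 1`. Hence, when `⟨g⟩^G` is minimal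
normal, either `[g,G] = 1`, i.e. `g` is central, or `[g,G] = ⟨g⟩^G ∋ g`, and then `g = 1`.
-/

lemma conj_commutatorElement {G : Type*} [Group G] (g x y : G) :
    y * ⁅g, x⁆ * y⁻¹ = ⁅g, y⁆⁻¹ * ⁅g, y * x⁆ := by
  simp only [commutatorElement_def]
  group

namespace commSub

variable {G : Type*} [Group G]

instance normal (g : G) : (commSub g).Normal where
  conj_mem n hn y := by
    induction hn using Subgroup.closure_induction with
    | mem c hc =>
      obtain ⟨x, rfl⟩ := hc
      rw [conj_commutatorElement]
      exact mul_mem (inv_mem (Subgroup.subset_closure ⟨y, rfl⟩))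
        (Subgroup.subset_closure ⟨y * x, rfl⟩)
    | one => simp
    | mul a b _ _ ha hb =>
      simpa only [mul_assoc, inv_mul_cancel_left] using mul_mem ha hb
    | inv a _ ha =>
      simpa only [mul_inv_rev, inv_inv, mul_assoc] using inv_mem ha

lemma le_normalClosure (g : G) : commSub g ≤ Subgroup.normalClosure {g} := by
  refine Subgroup.closure_le _ |>.2 ?_
  rintro _ ⟨x, rfl⟩
  exact Subgroup.commutator_le_left _ ⊤ <| Subgroup.commutator_mem_commutator
    (Subgroup.subset_normalClosure rfl) (Subgroup.mem_top x)

lemma mem_center_of_eq_bot {g : G} (h : commSub g = ⊥) : g ∈ Subgroup.center G := by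
  refine Subgroup.mem_center_iff.2 fun x => ?_
  have hx : ⁅g, x⁆ ∈ commSub g := Subgroup.subset_closure ⟨x, rfl⟩
  rw [h, Subgroup.mem_bot, commutatorElement_eq_one_iff_mul_comm] at hx
  exact hx.symm

end commSub

lemma IsFlat.eq_one_of_mem_commSub_s6 {G : Type*} [Group G] {g : G} (hflat : IsFlat g)
    (hg : g ∈ commSub g) : g = 1 := by
  have hconj : (1 : G) ∈ conjClass g := by
    rw [hflat]
    exact ⟨g⁻¹, inv_mem hg, mul_inv_cancel g⟩
  exact isConj_one_left.mp hconj

theorem flat_min_normal_central_general {G : Type*} [Group G]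
    (M : Subgroup G) (g : G)
    (hflat : IsFlat g)
    (hclosure : Subgroup.normalClosure ({g} : Set G) = M)
    (hmin : ∀ K : Subgroup G, K.Normal → K ≤ M → K = ⊥ ∨ K = M) :
    g ∈ Subgroup.center G := by
  subst hclosure
  rcases hmin (commSub g) (commSub.normal g) (commSub.le_normalClosure g) with hbot | htop
  · exact commSub.mem_center_of_eq_bot hbot
  · have hg : g ∈ commSub g := htop ▸ Subgroup.subset_normalClosure rfl
    rw [hflat.eq_one_of_mem_commSub_s6 hg]
    exact one_mem _

theorem flat_min_normal_central {G : Type*} [Group G] [Fintype G]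
    (N M : Subgroup G) [N.Normal] [M.Normal] (g : G) (hg : g ∈ N)
    (hflat : IsFlat g)
    (hclosure : Subgroup.normalClosure ({g} : Set G) = M)
    (hMN : M ≤ N) (hMbot : M ≠ ⊥)
    (hmin : ∀ K : Subgroup G, K.Normal → K ≤ M → K = ⊥ ∨ K = M) :
    g ∈ Subgroup.center G :=
  flat_min_normal_central_general M g hflat hclosure hmin
end
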